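/- The ℂ-vector space of homogeneous degree-3 Heisenberg-invariant polynomials in ℂ[Y₀, Y₁, Y₂] has dimension 2, with basis {Y₀³ + Y₁³ + Y₂³, Y₀Y₁Y₂}. (Consequently every Heisenberg-invariant plane cubic is, up to scalar, of Hesse form Y₀³ + Y₁³ + Y₂³ − 3λ·Y₀Y₁Y₂.) -/

import Mathlib

open MvPolynomial

/-- `ω = exp(2πi/3)`, a primitive cube root of unity. -/
noncomputable def omega : ℂ := Complex.exp (2 * Real.pi * Complex.I / 3)

/-- The cyclic substitution `σ : Y_i ↦ Y_{i+1 (mod 3)}` on `ℂ[Y₀,Y₁,Y₂]`. -/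
noncomputable def sigOp : MvPolynomial (Fin 3) ℂ →ₐ[ℂ] MvPolynomial (Fin 3) ℂ :=
  rename (· + 1)

/-- The substitution `τ : Y_i ↦ ω^i · Y_i` on `ℂ[Y₀,Y₁,Y₂]`. -/
noncomputable def tauOp : MvPolynomial (Fin 3) ℂ →ₐ[ℂ] MvPolynomial (Fin 3) ℂ :=
  aeval fun i : Fin 3 => C (omega ^ (i : ℕ)) * X i

lemma omega_prim : IsPrimitiveRoot omega 3 := by
  have := Complex.isPrimitiveRoot_exp 3 (by norm_num)
  convert this using 2
  simp [omega]

lemma omega_pow3 : omega ^ 3 = 1 := omega_prim.pow_eq_one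

lemma omega_pow_eq_one_iff (k : ℕ) : omega ^ k = 1 ↔ 3 ∣ k :=
  omega_prim.pow_eq_one_iff_dvd k

lemma tauOp_monomial (u : Fin 3 →₀ ℕ) (a : ℂ) :
    tauOp (monomial u a) = monomial u (omega ^ (∑ i : Fin 3, (i : ℕ) * u i) * a) := by
  rw [tauOp, aeval_monomial]
  have h1 : (u.prod fun i n => (C (omega ^ (i:ℕ)) * X i) ^ n)
      = ∏ i : Fin 3, (C (omega ^ (i:ℕ)) * X i) ^ u i :=
    Finsupp.prod_fintype _ _ (fun i => pow_zero _)
  rw [h1]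
  simp only [mul_pow, ← C_pow, ← pow_mul, Finset.prod_mul_distrib, ← map_prod]
  rw [monomial_eq]
  have h2 : (u.prod fun i n => (X i : MvPolynomial (Fin 3) ℂ) ^ n) = ∏ i : Fin 3, X i ^ u i :=
    Finsupp.prod_fintype _ _ (fun i => pow_zero _)
  rw [h2, Finset.prod_pow_eq_pow_sum]
  rw [algebraMap_eq, map_mul]
  ring

lemma coeff_tauOp (P : MvPolynomial (Fin 3) ℂ) (d : Fin 3 →₀ ℕ) :
    coeff d (tauOp P) = omega ^ (∑ i : Fin 3, (i : ℕ) * d i) * coeff d P := by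
  induction P using MvPolynomial.induction_on' with
  | monomial u a =>
    rw [tauOp_monomial, coeff_monomial, coeff_monomial]
    split <;> simp_all
  | add p q hp hq => simp [map_add, hp, hq, mul_add]

/-- triple exponent -/
noncomputable def mh (x y z : ℕ) : Fin 3 →₀ ℕ :=
  Finsupp.single 0 x + Finsupp.single 1 y + Finsupp.single 2 z

lemma mh_apply0 (x y z : ℕ) : mh x y z 0 = x := by simp [mh, Finsupp.single_apply]
lemma mh_apply1 (x y z : ℕ) : mh x y z 1 = y := by simp [mh, Finsupp.single_apply]
lemma mh_apply2 (x y z : ℕ) : mh x y z 2 = z := by simp [mh, Finsupp.single_apply]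

lemma mh_apply (x y z : ℕ) :
    mh x y z 0 = x ∧ mh x y z 1 = y ∧ mh x y z 2 = z :=
  ⟨mh_apply0 x y z, mh_apply1 x y z, mh_apply2 x y z⟩

lemma eq_tri (x y z : ℕ) (d : Fin 3 →₀ ℕ) :
    (mh x y z = d) ↔ (d 0 = x ∧ d 1 = y ∧ d 2 = z) := by
  constructor
  · rintro rfl
    exact mh_apply x y z
  · rintro ⟨h0, h1, h2⟩
    ext i
    fin_cases i <;>
      simp_all [mh, Finsupp.single_apply]

lemma degree_tri (d : Fin 3 →₀ ℕ) : d.degree = d 0 + d 1 + d 2 := by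
  rw [Finsupp.degree_apply,
    Finset.sum_subset (Finset.subset_univ _) (fun i _ hi => Finsupp.notMem_support_iff.1 hi),
    Fin.sum_univ_three]

lemma f_eq : (X 0 ^ 3 + X 1 ^ 3 + X 2 ^ 3 : MvPolynomial (Fin 3) ℂ)
    = monomial (mh 3 0 0) 1 + monomial (mh 0 3 0) 1 + monomial (mh 0 0 3) 1 := by
  rw [X_pow_eq_monomial, X_pow_eq_monomial, X_pow_eq_monomial]
  congr 2 <;> simp [mh]

lemma g_eq : (X 0 * X 1 * X 2 : MvPolynomial (Fin 3) ℂ) = monomial (mh 1 1 1) 1 := by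
  rw [X, X, X, monomial_mul, monomial_mul]
  simp [mh]

lemma coeff_f (d : Fin 3 →₀ ℕ) :
    coeff d (X 0 ^ 3 + X 1 ^ 3 + X 2 ^ 3 : MvPolynomial (Fin 3) ℂ)
      = (if d 0 = 3 ∧ d 1 = 0 ∧ d 2 = 0 then 1 else 0)
        + (if d 0 = 0 ∧ d 1 = 3 ∧ d 2 = 0 then 1 else 0)
        + (if d 0 = 0 ∧ d 1 = 0 ∧ d 2 = 3 then 1 else 0) := by
  rw [f_eq, coeff_add, coeff_add, coeff_monomial, coeff_monomial, coeff_monomial]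
  simp only [eq_tri]

lemma coeff_g (d : Fin 3 →₀ ℕ) :
    coeff d (X 0 * X 1 * X 2 : MvPolynomial (Fin 3) ℂ)
      = (if d 0 = 1 ∧ d 1 = 1 ∧ d 2 = 1 then 1 else 0) := by
  rw [g_eq, coeff_monomial]
  simp only [eq_tri]

lemma weight_tri (d : Fin 3 →₀ ℕ) :
    (∑ i : Fin 3, (i : ℕ) * d i) = d 1 + 2 * d 2 := by
  rw [Fin.sum_univ_three]
  norm_num

/-- the space of homogeneous degree-3 Heisenberg-invariant
polynomials in `ℂ[Y₀,Y₁,Y₂]` has dimension 2, with basis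
`{Y₀³+Y₁³+Y₂³, Y₀Y₁Y₂}`. -/
theorem stmt_11 :
    LinearIndependent ℂ ![(X 0 ^ 3 + X 1 ^ 3 + X 2 ^ 3 : MvPolynomial (Fin 3) ℂ),
      X 0 * X 1 * X 2] ∧
    ∀ P : MvPolynomial (Fin 3) ℂ,
      (P.IsHomogeneous 3 ∧ sigOp P = P ∧ tauOp P = P) ↔
        P ∈ Submodule.span ℂ
          (Set.range ![(X 0 ^ 3 + X 1 ^ 3 + X 2 ^ 3 : MvPolynomial (Fin 3) ℂ),
            X 0 * X 1 * X 2]) := by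
  set f : MvPolynomial (Fin 3) ℂ := X 0 ^ 3 + X 1 ^ 3 + X 2 ^ 3 with hfdef
  set g : MvPolynomial (Fin 3) ℂ := X 0 * X 1 * X 2 with hgdef
  have hrange : Set.range ![f, g] = {f, g} := by
    ext x
    simp [Matrix.range_cons, Matrix.range_empty]
    tauto
  have h3 : omega ^ 3 = 1 := omega_pow3
  have h6 : omega ^ 6 = 1 := by
    rw [show (6 : ℕ) = 3 * 2 from rfl, pow_mul, h3, one_pow]
  -- sigma and tau fix f and g
  have hsf : sigOp f = f := by
    simp only [hfdef, sigOp, map_add, map_pow, rename_X]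
    have e0 : (0 : Fin 3) + 1 = 1 := rfl
    have e1 : (1 : Fin 3) + 1 = 2 := rfl
    have e2 : (2 : Fin 3) + 1 = 0 := rfl
    rw [e0, e1, e2]; ring
  have hsg : sigOp g = g := by
    simp only [hgdef, sigOp, map_mul, rename_X]
    have e0 : (0 : Fin 3) + 1 = 1 := rfl
    have e1 : (1 : Fin 3) + 1 = 2 := rfl
    have e2 : (2 : Fin 3) + 1 = 0 := rfl
    rw [e0, e1, e2]; ring
  have htf : tauOp f = f := by
    simp only [hfdef, tauOp, map_add, map_pow, aeval_X]
    rw [show (((0 : Fin 3) : ℕ)) = 0 from rfl, show (((1 : Fin 3) : ℕ)) = 1 from rfl,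
      show (((2 : Fin 3) : ℕ)) = 2 from rfl]
    have e0 : (C omega ^ 0 * X 0 : MvPolynomial (Fin 3) ℂ) ^ 3 = X 0 ^ 3 := by
      rw [pow_zero, one_mul]
    have e1 : (C omega ^ 1 * X 1 : MvPolynomial (Fin 3) ℂ) ^ 3 = X 1 ^ 3 := by
      rw [pow_one, mul_pow, ← C_pow, h3, C_1, one_mul]
    have e2 : (C omega ^ 2 * X 2 : MvPolynomial (Fin 3) ℂ) ^ 3 = X 2 ^ 3 := by
      rw [mul_pow, ← pow_mul, ← C_pow]
      norm_num [h6]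
    rw [e0, e1, e2]
  have htg : tauOp g = g := by
    simp only [hgdef, tauOp, map_mul, aeval_X]
    rw [show (((0 : Fin 3) : ℕ)) = 0 from rfl, show (((1 : Fin 3) : ℕ)) = 1 from rfl,
      show (((2 : Fin 3) : ℕ)) = 2 from rfl]
    have : (C (omega ^ 0) * X 0) * (C (omega ^ 1) * X 1) * (C (omega ^ 2) * X 2)
        = C (omega ^ 0 * omega ^ 1 * omega ^ 2) * (X 0 * X 1 * X 2 : MvPolynomial (Fin 3) ℂ) := by
      rw [C_mul, C_mul]
      ring
    rw [this, ← pow_add, ← pow_add]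
    norm_num [h3]
  have hhf : f.IsHomogeneous 3 :=
    ((isHomogeneous_X_pow 0 3).add (isHomogeneous_X_pow 1 3)).add (isHomogeneous_X_pow 2 3)
  have hhg : g.IsHomogeneous 3 :=
    ((isHomogeneous_X ℂ 0).mul (isHomogeneous_X ℂ 1)).mul (isHomogeneous_X ℂ 2)
  constructor
  · rw [LinearIndependent.pair_iff]
    intro s t hst
    have cf1 : coeff (mh 3 0 0) f = 1 := by
      rw [hfdef, coeff_f]
      simp only [mh_apply0, mh_apply1, mh_apply2]
      norm_num
    have cg1 : coeff (mh 3 0 0) g = 0 := by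
      rw [hgdef, coeff_g]
      simp only [mh_apply0, mh_apply1, mh_apply2]
      norm_num
    have cf2 : coeff (mh 1 1 1) f = 0 := by
      rw [hfdef, coeff_f]
      simp only [mh_apply0, mh_apply1, mh_apply2]
      norm_num
    have cg2 : coeff (mh 1 1 1) g = 1 := by
      rw [hgdef, coeff_g]
      simp only [mh_apply0, mh_apply1, mh_apply2]
      norm_num
    have c1 := congrArg (coeff (mh 3 0 0)) hst
    have c2 := congrArg (coeff (mh 1 1 1)) hst
    rw [coeff_add, coeff_smul, coeff_smul, cf1, cg1, coeff_zero] at c1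
    rw [coeff_add, coeff_smul, coeff_smul, cf2, cg2, coeff_zero] at c2
    constructor
    · simpa using c1
    · simpa using c2
  · intro P
    constructor
    · rintro ⟨hhom, hsig, htau⟩
      -- reverse: invariant homogeneous P lies in span
      set a : ℂ := coeff (mh 3 0 0) P with ha
      set b : ℂ := coeff (mh 1 1 1) P with hb
      -- sigma-invariance on coefficients
      have hinj : Function.Injective (fun i : Fin 3 => i + 1) :=
        add_left_injective (1 : Fin 3)
      have hshift : ∀ u : Fin 3 →₀ ℕ, coeff (Finsupp.mapDomain (· + 1) u) P = coeff u P := by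
        intro u
        conv_lhs => rw [← hsig]
        exact coeff_rename_mapDomain _ hinj P u
      have hc1 : coeff (mh 0 3 0) P = a := by
        have := hshift (Finsupp.single 0 3)
        rw [Finsupp.mapDomain_single] at this
        rw [ha]
        convert this using 2 <;> simp [mh]
      have hc2 : coeff (mh 0 0 3) P = a := by
        have := hshift (Finsupp.single 1 3)
        rw [Finsupp.mapDomain_single] at this
        rw [← hc1]
        convert this using 2 <;> simp [mh]
      -- tau-invariance kills non-divisible monomials
      have htzero : ∀ d : Fin 3 →₀ ℕ, ¬ (3 ∣ d 1 + 2 * d 2) → coeff d P = 0 := by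
        intro d hdiv
        have hs := coeff_tauOp P d
        rw [htau, weight_tri] at hs
        have hne : omega ^ (d 1 + 2 * d 2) ≠ 1 := fun h =>
          hdiv ((omega_pow_eq_one_iff _).1 h)
        have hz : (omega ^ (d 1 + 2 * d 2) - 1) * coeff d P = 0 := by
          rw [sub_mul, one_mul, ← hs, sub_self]
        rcases mul_eq_zero.1 hz with h | h
        · exact absurd (sub_eq_zero.mp h) hne
        · exact h
      have key : P = C a * f + C b * g := by
        ext d
        rw [coeff_add, coeff_C_mul, coeff_C_mul, coeff_f, coeff_g]
        by_cases hdeg : d 0 + d 1 + d 2 = 3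
        · by_cases hdiv : 3 ∣ d 1 + 2 * d 2
          · have hcases : (d 0 = 3 ∧ d 1 = 0 ∧ d 2 = 0) ∨ (d 0 = 0 ∧ d 1 = 3 ∧ d 2 = 0)
                ∨ (d 0 = 0 ∧ d 1 = 0 ∧ d 2 = 3) ∨ (d 0 = 1 ∧ d 1 = 1 ∧ d 2 = 1) := by
              obtain ⟨k, hk⟩ := hdiv
              have h1 : d 1 = 0 ∨ d 1 = 1 ∨ d 1 = 2 ∨ d 1 = 3 := by omega
              have h2 : d 2 = 0 ∨ d 2 = 1 ∨ d 2 = 2 ∨ d 2 = 3 := by omega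
              rcases h1 with h1 | h1 | h1 | h1 <;> rcases h2 with h2 | h2 | h2 | h2 <;> omega
            rcases hcases with h | h | h | h
            · have hd : mh 3 0 0 = d := (eq_tri _ _ _ _).2 h
              rw [← hd]
              simp only [mh_apply0, mh_apply1, mh_apply2]
              norm_num [← ha]
            · have hd : mh 0 3 0 = d := (eq_tri _ _ _ _).2 h
              rw [← hd]
              simp only [mh_apply0, mh_apply1, mh_apply2]
              norm_num [hc1]
            · have hd : mh 0 0 3 = d := (eq_tri _ _ _ _).2 h
              rw [← hd]
              simp only [mh_apply0, mh_apply1, mh_apply2]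
              norm_num [hc2]
            · have hd : mh 1 1 1 = d := (eq_tri _ _ _ _).2 h
              rw [← hd]
              simp only [mh_apply0, mh_apply1, mh_apply2]
              norm_num [← hb]
          · rw [htzero d hdiv]
            have c1 : ¬(d 0 = 3 ∧ d 1 = 0 ∧ d 2 = 0) := by omega
            have c2 : ¬(d 0 = 0 ∧ d 1 = 3 ∧ d 2 = 0) := by omega
            have c3 : ¬(d 0 = 0 ∧ d 1 = 0 ∧ d 2 = 3) := by omega
            have c4 : ¬(d 0 = 1 ∧ d 1 = 1 ∧ d 2 = 1) := by omega
            rw [if_neg c1, if_neg c2, if_neg c3, if_neg c4]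
            ring
        · have hz : coeff d P = 0 :=
            hhom.coeff_eq_zero (by rw [degree_tri]; exact hdeg)
          rw [hz]
          have c1 : ¬(d 0 = 3 ∧ d 1 = 0 ∧ d 2 = 0) := by omega
          have c2 : ¬(d 0 = 0 ∧ d 1 = 3 ∧ d 2 = 0) := by omega
          have c3 : ¬(d 0 = 0 ∧ d 1 = 0 ∧ d 2 = 3) := by omega
          have c4 : ¬(d 0 = 1 ∧ d 1 = 1 ∧ d 2 = 1) := by omega
          rw [if_neg c1, if_neg c2, if_neg c3, if_neg c4]
          ring
      rw [hrange]
      exact Submodule.mem_span_pair.2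
        ⟨a, b, by rw [smul_eq_C_mul, smul_eq_C_mul]; exact key.symm⟩
    · intro hP
      rw [hrange, Submodule.mem_span_pair] at hP
      obtain ⟨s, t, rfl⟩ := hP
      refine ⟨?_, ?_, ?_⟩
      · rw [smul_eq_C_mul, smul_eq_C_mul]
        exact (hhf.C_mul s).add (hhg.C_mul t)
      · rw [map_add, map_smul, map_smul, hsf, hsg]
      · rw [map_add, map_smul, map_smul, htf, htg]
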